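/- In G = ℤ² ⋊ ℤ/2ℤ (swap action) with a = ((1,0),0), t = ((0,0),1), for x₁, x₂, y ≥ 0 the word length of the element represented by a^{x₁} t a^{y} t a^{x₂} equals x₁ + x₂ + y + 2 when y > 0; in particular each such word with x₁, x₂ ≥ 0 and y > 0 is geodesic, giving x₁ + x₂ + 1 distinct geodesic words over {a±1, t±1} representing the element ((x₁+x₂, y), 0). -/

import Mathlib

/-- The coordinate-swapping automorphism of ℤ². -/
def swapAut : MulAut (Multiplicative (ℤ × ℤ)) :=
  AddEquiv.toMultiplicative (AddEquiv.prodComm : (ℤ × ℤ) ≃+ (ℤ × ℤ))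

lemma swapAut_sq : swapAut ^ 2 = 1 := by
  refine MulEquiv.ext (fun z => ?_)
  show swapAut (swapAut z) = z
  cases z
  rfl

/-- The action of ℤ/2ℤ on ℤ² by swapping the two coordinates. -/
def swapAction : Multiplicative (ZMod 2) →* MulAut (Multiplicative (ℤ × ℤ)) where
  toFun ε := swapAut ^ (Multiplicative.toAdd ε).val
  map_one' := rfl
  map_mul' x y := by
    show swapAut ^ _ = swapAut ^ _ * swapAut ^ _
    rw [← pow_add]
    have key : ∀ m n : ℕ, m % 2 = n % 2 → swapAut ^ m = swapAut ^ n := by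
      intro m n h
      rw [← Nat.div_add_mod m 2, ← Nat.div_add_mod n 2, h, pow_add, pow_add,
        pow_mul, pow_mul, swapAut_sq]
      simp
    apply key
    have := ZMod.val_add (Multiplicative.toAdd x) (Multiplicative.toAdd y)
    simp only [toAdd_mul] at *
    omega

/-- The group G = ℤ² ⋊ ℤ/2ℤ with the swap action. -/
abbrev GG := SemidirectProduct (Multiplicative (ℤ × ℤ)) (Multiplicative (ZMod 2)) swapAction

/-- The generator a = ((1,0), 0). -/
def ga : GG := SemidirectProduct.inl (Multiplicative.ofAdd ((1, 0) : ℤ × ℤ))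

/-- The generator t = ((0,0), 1). -/
def gt : GG := SemidirectProduct.inr (Multiplicative.ofAdd (1 : ZMod 2))

/-- The element ((x,y), ε) of G. -/
def el (x y : ℤ) (ε : ZMod 2) : GG :=
  ⟨Multiplicative.ofAdd (x, y), Multiplicative.ofAdd ε⟩

/-- The generating set A = {a, a⁻¹, t, t⁻¹}. -/
def GenSet : Set GG := {ga, ga⁻¹, gt, gt⁻¹}

/-- `w` is a word over the alphabet A. -/
def IsWord (w : List GG) : Prop := ∀ x ∈ w, x ∈ GenSet

/-- `w` is a word over A representing the group element `g` (via its product). -/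
def Represents (w : List GG) (g : GG) : Prop := IsWord w ∧ w.prod = g

/-- The word length of `g`: minimal length of a word over A representing `g`. -/
noncomputable def wordLength (g : GG) : ℕ :=
  sInf {n | ∃ w : List GG, Represents w g ∧ w.length = n}

/-- A word over A is geodesic if no strictly shorter word over A represents
the same element. -/
def IsGeodesic (w : List GG) : Prop :=
  IsWord w ∧ ∀ v : List GG, IsWord v → v.prod = w.prod → w.length ≤ v.length

open Classical in
/-- The number of t-letters of a word (occurrences of t and t⁻¹). -/
noncomputable def tCount (w : List GG) : ℕ :=
  w.countP (fun x => decide (x = gt ∨ x = gt⁻¹))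

/-- The word aˣ over A: x letters `a` if x ≥ 0, |x| letters `a⁻¹` if x < 0. -/
def apow (x : ℤ) : List GG :=
  if 0 ≤ x then List.replicate x.toNat ga else List.replicate (-x).toNat ga⁻¹

/-- The word metric on G with respect to A. -/
noncomputable def dA (g h : GG) : ℕ := wordLength (g⁻¹ * h)

/-- The point of G reached at time i along the word w (the endpoint if i
exceeds the length of w). -/
def pt (w : List GG) (i : ℕ) : GG := (w.take i).prod

/-- Words u and w synchronously k-fellow travel. -/
def FellowTravels (k : ℕ) (u w : List GG) : Prop :=
  ∀ i : ℕ, dA (pt u i) (pt w i) ≤ k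

/-!
The swap action preserves `x + y`, so `((x, y), ε) ↦ x + y` is a homomorphism `G → ℤ` taking the
values `1, -1, 0` on `a, a⁻¹, t = t⁻¹`, while `ε` counts the `t`-letters mod 2. Hence a word `w`
over `A` representing `((x, y), 0)` has length `x + y + 2 #a⁻¹(w) + #t(w)`, where `#t(w)` is even,
and nonzero when `y ≠ 0` because `t`-free words represent powers of `a`. So the word length is
`x + y + 2`, and the words of that length are those without `a⁻¹` and with exactly two `t`'s, that
is `aˢ t aᵐ t aʳ` with `m = y`, `s + r = x`; the position `s` of the first `t` tells them apart.
-/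

open SemidirectProduct List

theorem List.exists_eq_replicate_append_cons {α : Type*} {a b : α} :
    ∀ {l : List α}, (∀ x ∈ l, x = a ∨ x = b) → b ∈ l → ∃ n r, l = replicate n a ++ b :: r
  | [], _, hb => absurd hb not_mem_nil
  | x :: l, hl, hb => by
    by_cases hxb : x = b
    · exact ⟨0, l, by rw [hxb]; rfl⟩
    · have hxa : x = a := (hl x mem_cons_self).resolve_right hxb
      have hbl : b ∈ l := (mem_cons.mp hb).resolve_left (Ne.symm hxb)
      obtain ⟨n, r, rfl⟩ :=
        exists_eq_replicate_append_cons (fun y hy => hl y (mem_cons_of_mem x hy)) hbl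
      exact ⟨n + 1, r, by rw [hxa, replicate_succ, cons_append]⟩

lemma swapAction_eq_one_or_swapAut (ε : Multiplicative (ZMod 2)) :
    swapAction ε = 1 ∨ swapAction ε = swapAut := by
  change swapAut ^ _ = 1 ∨ swapAut ^ _ = swapAut
  have := ZMod.val_lt (Multiplicative.toAdd ε)
  generalize (Multiplicative.toAdd ε).val = k at *
  interval_cases k <;> simp

lemma swapAction_ofAdd_one : swapAction (Multiplicative.ofAdd 1) = swapAut := pow_one _

lemma el_inj {x y x' y' : ℤ} {ε ε' : ZMod 2} :
    el x y ε = el x' y' ε' ↔ x = x' ∧ y = y' ∧ ε = ε' := by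
  simp [el, SemidirectProduct.ext_iff, and_assoc]

lemma el_zero_mul_el (x y x' y' : ℤ) (ε : ZMod 2) :
    el x y 0 * el x' y' ε = el (x + x') (y + y') ε := by
  ext <;> simp [el]

lemma gt_mul_el (x y : ℤ) (ε : ZMod 2) : gt * el x y ε = el y x (1 + ε) := by
  ext <;> simp [el, gt, swapAction_ofAdd_one, swapAut]

lemma ga_zpow (n : ℤ) : ga ^ n = el n 0 0 := by
  rw [ga, ← map_zpow, ← ofAdd_zsmul]
  ext <;> simp [el]

lemma ga_pow (n : ℕ) : ga ^ n = el n 0 0 := by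
  rw [← zpow_natCast, ga_zpow]

lemma gt_inv : gt⁻¹ = gt := by decide

lemma ga_ne_gt : ga ≠ gt := by decide

lemma ga_inv_ne_ga : ga⁻¹ ≠ ga := by decide

lemma ga_inv_ne_gt : ga⁻¹ ≠ gt := by decide

def coordSum : GG →* Multiplicative ℤ :=
  lift (AddMonoidHom.toMultiplicative ((AddMonoidHom.id ℤ).coprod (AddMonoidHom.id ℤ))) 1
    fun ε => MonoidHom.ext fun z => by
      rcases swapAction_eq_one_or_swapAut ε with h | h <;> simp [h, swapAut, mul_comm]

@[simp] lemma coordSum_el (x y : ℤ) (ε : ZMod 2) :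
    coordSum (el x y ε) = Multiplicative.ofAdd (x + y) := by
  simp [coordSum, el, lift]

@[simp] lemma coordSum_ga : coordSum ga = Multiplicative.ofAdd 1 := rfl

@[simp] lemma coordSum_gt : coordSum gt = 1 := rfl

@[simp] lemma ga_right : ga.right = 1 := rfl

@[simp] lemma gt_right : gt.right = Multiplicative.ofAdd 1 := rfl

lemma mem_genSet {x : GG} : x ∈ GenSet ↔ x = ga ∨ x = ga⁻¹ ∨ x = gt := by
  simp [GenSet, gt_inv]

lemma isWord_cons {x : GG} {w : List GG} : IsWord (x :: w) ↔ x ∈ GenSet ∧ IsWord w :=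
  forall_mem_cons

lemma IsWord.length_eq {w : List GG} (hw : IsWord w) :
    (w.length : ℤ) = Multiplicative.toAdd (coordSum w.prod) + 2 * w.count ga⁻¹ + w.count gt := by
  induction w with
  | nil => simp
  | cons x w ih =>
    obtain ⟨hx, hrest⟩ := isWord_cons.mp hw
    rcases mem_genSet.mp hx with rfl | rfl | rfl <;>
      simp only [length_cons, prod_cons, map_mul, map_inv, coordSum_ga, coordSum_gt, one_mul,
        toAdd_mul, toAdd_inv, toAdd_ofAdd, count_cons_self, count_cons_of_ne, ne_eq, ga_ne_gt,
        ga_inv_ne_ga.symm, ga_inv_ne_gt, ga_inv_ne_gt.symm, not_false_eq_true, Nat.cast_add,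
        Nat.cast_one, ih hrest] <;> ring

lemma IsWord.right_prod {w : List GG} (hw : IsWord w) :
    w.prod.right = Multiplicative.ofAdd (w.count gt : ZMod 2) := by
  induction w with
  | nil => rfl
  | cons x w ih =>
    obtain ⟨hx, hrest⟩ := isWord_cons.mp hw
    rcases mem_genSet.mp hx with rfl | rfl | rfl <;>
      simp [mul_right, ih hrest, ga_ne_gt, ga_inv_ne_gt, ← ofAdd_add, add_comm]

lemma IsWord.prod_mem_zpowers_ga {w : List GG} (hw : IsWord w) (ht : gt ∉ w) :
    w.prod ∈ Subgroup.zpowers ga := by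
  refine Subgroup.list_prod_mem _ fun x hx => ?_
  rcases mem_genSet.mp (hw x hx) with rfl | rfl | rfl
  · exact Subgroup.mem_zpowers ga
  · exact Subgroup.inv_mem _ (Subgroup.mem_zpowers ga)
  · exact absurd hx ht

lemma IsWord.two_le_count_gt {w : List GG} (hw : IsWord w) {x y : ℤ} (hy : y ≠ 0)
    (hp : w.prod = el x y 0) : 2 ≤ w.count gt := by
  have hmem : gt ∈ w := by
    by_contra ht
    obtain ⟨n, hn⟩ := Subgroup.mem_zpowers_iff.mp (hw.prod_mem_zpowers_ga ht)
    rw [← hn, ga_zpow, el_inj] at hp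
    exact hy hp.2.1.symm
  have heven : 2 ∣ w.count gt := by
    have hright := hw.right_prod
    rw [hp] at hright
    exact (ZMod.natCast_eq_zero_iff _ _).mp (Multiplicative.ofAdd.injective hright).symm
  have := count_pos_iff.mpr hmem
  omega

lemma IsWord.add_two_le_length {w : List GG} (hw : IsWord w) {x y : ℤ} (hy : y ≠ 0)
    (hp : w.prod = el x y 0) : x + y + 2 ≤ w.length := by
  have := hw.two_le_count_gt hy hp
  rw [hw.length_eq, hp, coordSum_el, toAdd_ofAdd]
  omega

def twoTWord (s m r : ℕ) : List GG :=
  replicate s ga ++ gt :: (replicate m ga ++ gt :: replicate r ga)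

lemma twoTWord_length (s m r : ℕ) : (twoTWord s m r).length = s + m + r + 2 := by
  simp only [twoTWord, length_append, length_cons, length_replicate]
  omega

lemma isWord_twoTWord (s m r : ℕ) : IsWord (twoTWord s m r) := by
  intro x hx
  simp only [twoTWord, mem_append, mem_cons, mem_replicate] at hx
  rcases hx with ⟨-, rfl⟩ | rfl | ⟨-, rfl⟩ | rfl | ⟨-, rfl⟩ <;> simp [mem_genSet]

lemma twoTWord_prod (s m r : ℕ) : (twoTWord s m r).prod = el ↑(s + r) m 0 := by
  simp [twoTWord, ga_pow, gt_mul_el, el_zero_mul_el, show (1 : ZMod 2) + 1 = 0 by decide]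

lemma idxOf_gt_twoTWord (s m r : ℕ) : (twoTWord s m r).idxOf gt = s := by
  rw [twoTWord, idxOf_append_of_notMem (by simp [ga_ne_gt.symm]), idxOf_cons_self]
  simp

lemma eq_twoTWord_of_count_gt_eq_two {w : List GG} (hw : ∀ x ∈ w, x = ga ∨ x = gt)
    (h2 : w.count gt = 2) : ∃ s m r, w = twoTWord s m r := by
  obtain ⟨s, w₁, rfl⟩ := exists_eq_replicate_append_cons hw (count_pos_iff.mp (by omega))
  have hc₁ : w₁.count gt = 1 := by simpa [count_replicate, ga_ne_gt] using h2
  obtain ⟨m, w₂, rfl⟩ := exists_eq_replicate_append_cons (l := w₁)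
    (fun x hx => hw x (by simp [hx])) (count_pos_iff.mp (by omega))
  have hc₂ : gt ∉ w₂ := count_eq_zero.mp (by simpa [count_replicate, ga_ne_gt] using hc₁)
  refine ⟨s, m, w₂.length, ?_⟩
  rw [twoTWord, ← eq_replicate_length.mpr fun x hx =>
    (hw x (by simp [hx])).resolve_right (ne_of_mem_of_not_mem hx hc₂)]

lemma isWord_prod_el_length_eq_iff {u v : ℕ} (hv : v ≠ 0) {w : List GG} :
    IsWord w ∧ w.prod = el u v 0 ∧ w.length = u + v + 2 ↔
      ∃ s ≤ u, w = twoTWord s v (u - s) := by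
  constructor
  · rintro ⟨hw, hp, hl⟩
    have h2 := hw.two_le_count_gt (by exact_mod_cast hv) hp
    have hlen := hw.length_eq
    rw [hp, coordSum_el, toAdd_ofAdd, hl] at hlen
    have hinv : ga⁻¹ ∉ w := count_eq_zero.mp (by omega)
    have hletters : ∀ x ∈ w, x = ga ∨ x = gt := fun x hx => by
      rcases mem_genSet.mp (hw x hx) with h | h | h
      exacts [.inl h, absurd (h ▸ hx) hinv, .inr h]
    obtain ⟨s, m, r, rfl⟩ := eq_twoTWord_of_count_gt_eq_two hletters (by omega)
    obtain ⟨hsr, hm, -⟩ := el_inj.mp (hp.symm.trans (twoTWord_prod s m r))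
    refine ⟨s, by omega, ?_⟩
    rw [show m = v by omega, show r = u - s by omega]
  · rintro ⟨s, hs, rfl⟩
    refine ⟨isWord_twoTWord _ _ _, ?_, ?_⟩
    · rw [twoTWord_prod]
      congr 1
      omega
    · rw [twoTWord_length]
      omega

lemma wordLength_eq_of_forall_le {w : List GG} {g : GG} (hw : Represents w g)
    (h : ∀ v, Represents v g → w.length ≤ v.length) : wordLength g = w.length :=
  le_antisymm (Nat.sInf_le ⟨w, hw, rfl⟩)
    (le_csInf ⟨_, w, hw, rfl⟩ fun _ ⟨v, hv, hn⟩ => hn ▸ h v hv)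

lemma isGeodesic_iff {w : List GG} : IsGeodesic w ↔ IsWord w ∧ w.length = wordLength w.prod := by
  refine ⟨fun h => ⟨h.1, ?_⟩, fun ⟨hw, hl⟩ => ⟨hw, fun v hv hp => ?_⟩⟩
  · exact (wordLength_eq_of_forall_le ⟨h.1, rfl⟩ fun v hv => h.2 v hv.1 hv.2).symm
  · exact hl ▸ Nat.sInf_le ⟨v, ⟨hv, hp⟩, rfl⟩

lemma wordLength_el {u v : ℕ} (hv : v ≠ 0) : wordLength (el u v 0) = u + v + 2 := by
  obtain ⟨hw, hp, hl⟩ := (isWord_prod_el_length_eq_iff hv).mpr ⟨0, u.zero_le, rfl⟩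
  rw [← hl]
  refine wordLength_eq_of_forall_le ⟨hw, hp⟩ fun w hw' => ?_
  have := hw'.1.add_two_le_length (by exact_mod_cast hv) hw'.2
  omega

lemma setOf_isGeodesic_prod_eq {u v : ℕ} (hv : v ≠ 0) :
    {w | IsGeodesic w ∧ w.prod = el u v 0} =
      (Finset.range (u + 1)).image (fun s => twoTWord s v (u - s)) := by
  ext w
  have hgeod : IsGeodesic w ∧ w.prod = el u v 0 ↔
      IsWord w ∧ w.prod = el u v 0 ∧ w.length = u + v + 2 := by
    rw [isGeodesic_iff]
    constructor
    · rintro ⟨⟨hw, hl⟩, hp⟩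
      exact ⟨hw, hp, by rw [hl, hp, wordLength_el hv]⟩
    · rintro ⟨hw, hp, hl⟩
      exact ⟨⟨hw, by rw [hl, hp, wordLength_el hv]⟩, hp⟩
  rw [Set.mem_ofPred_eq, hgeod, isWord_prod_el_length_eq_iff hv]
  simp [eq_comm]

lemma ncard_setOf_isGeodesic_prod_eq {u v : ℕ} (hv : v ≠ 0) :
    {w | IsGeodesic w ∧ w.prod = el u v 0}.ncard = u + 1 := by
  rw [setOf_isGeodesic_prod_eq hv, Set.ncard_coe_finset,
    Finset.card_image_of_injective _ fun s s' h => ?_, Finset.card_range]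
  simpa [idxOf_gt_twoTWord] using congrArg (idxOf gt) h

lemma apow_of_nonneg {x : ℤ} (hx : 0 ≤ x) : apow x = replicate x.toNat ga := if_pos hx

/-- For x₁, x₂ ≥ 0 and y > 0, the word a^{x₁} t a^y t a^{x₂} is geodesic,
the word length of the element it represents, ((x₁+x₂, y), 0), is
x₁ + x₂ + y + 2, and there are exactly x₁ + x₂ + 1 distinct geodesic words
over A representing this element. -/
theorem bottom_layer_geodesics (x₁ x₂ y : ℤ) (h₁ : 0 ≤ x₁) (h₂ : 0 ≤ x₂) (hy : 0 < y) :
    (apow x₁ ++ [gt] ++ apow y ++ [gt] ++ apow x₂).prod = el (x₁ + x₂) y 0 ∧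
    wordLength (el (x₁ + x₂) y 0) = (x₁ + x₂ + y).toNat + 2 ∧
    IsGeodesic (apow x₁ ++ [gt] ++ apow y ++ [gt] ++ apow x₂) ∧
    {w : List GG | IsGeodesic w ∧ w.prod = el (x₁ + x₂) y 0}.ncard
      = (x₁ + x₂).toNat + 1 := by
  have hword : apow x₁ ++ [gt] ++ apow y ++ [gt] ++ apow x₂ =
      twoTWord x₁.toNat y.toNat x₂.toNat := by
    simp [apow_of_nonneg, h₁, h₂, hy.le, twoTWord]
  have hel : el (x₁ + x₂) y 0 = el ↑(x₁.toNat + x₂.toNat) ↑y.toNat 0 := by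
    congr <;> omega
  have hy' : y.toNat ≠ 0 := by omega
  rw [hword, hel]
  refine ⟨twoTWord_prod _ _ _, ?_, ?_, ?_⟩
  · rw [wordLength_el hy']
    omega
  · rw [isGeodesic_iff, twoTWord_length, twoTWord_prod, wordLength_el hy']
    exact ⟨isWord_twoTWord _ _ _, by omega⟩
  · rw [ncard_setOf_isGeodesic_prod_eq hy']
    omega
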